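/- arXiv:2601.07194 — 2 statements merged into one kernel-verified Lean document; each statement's English description precedes it below -/
import Mathlib

section
/- Let B₁,…,B_q be 2×2 real symmetric traceless matrices. Then ∑_{r,s} ‖[B_r,B_s]‖² ≤ (∑_r ‖B_r‖²)², where ‖·‖² denotes the sum of squares of the entries. -/
/-- DDVV inequality for 2×2 symmetric traceless matrices:
`∑_{r,s} ‖[B_r,B_s]‖² ≤ (∑_r ‖B_r‖²)²`. -/
theorem stmt_5 (q : ℕ) (B : Fin q → Matrix (Fin 2) (Fin 2) ℝ)
    (hsymm : ∀ r, (B r).IsSymm) (htrace : ∀ r, (B r).trace = 0) :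
    ∑ r, ∑ s, (∑ i, ∑ j, ((B r * B s - B s * B r) i j) ^ 2) ≤
      (∑ r, ∑ i, ∑ j, (B r i j) ^ 2) ^ 2 := by
  set a : Fin q → ℝ := fun r => B r 0 0 with ha
  set b : Fin q → ℝ := fun r => B r 0 1 with hb
  have h10 : ∀ r, B r 1 0 = b r := by
    intro r
    have := (hsymm r)
    rw [Matrix.IsSymm] at this
    have := congrFun (congrFun this 0) 1
    simpa [Matrix.transpose_apply] using this
  have h11 : ∀ r, B r 1 1 = - a r := by
    intro r
    have := htrace r
    rw [Matrix.trace_fin_two] at this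
    simp [ha]; linarith
  have key : ∀ r s, (∑ i, ∑ j, ((B r * B s - B s * B r) i j) ^ 2)
      = 8 * (a r * b s - a s * b r) ^ 2 := by
    intro r s
    simp only [Fin.sum_univ_two, Matrix.sub_apply, Matrix.mul_apply, h10, h11]
    ring
  have norm2 : ∀ r, (∑ i, ∑ j, (B r i j) ^ 2) = 2 * (a r ^ 2 + b r ^ 2) := by
    intro r
    simp only [Fin.sum_univ_two, h10, h11]
    ring
  simp only [key, norm2]
  set Sa := ∑ r, a r ^ 2 with hSa
  set Sb := ∑ r, b r ^ 2 with hSb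
  set Sab := ∑ r, a r * b r with hSab
  have hL : ∑ r, ∑ s, 8 * (a r * b s - a s * b r) ^ 2
      = 16 * (Sa * Sb - Sab ^ 2) := by
    rw [show (16:ℝ) * (Sa * Sb - Sab ^ 2)
        = 8 * (Sa * Sb) + 8 * (Sb * Sa) - 16 * (Sab * Sab) by ring]
    rw [hSa, hSb, hSab, Finset.sum_mul_sum, Finset.sum_mul_sum, Finset.sum_mul_sum]
    simp only [Finset.mul_sum]
    rw [← Finset.sum_add_distrib, ← Finset.sum_sub_distrib]
    refine Finset.sum_congr rfl fun r _ => ?_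
    rw [← Finset.sum_add_distrib, ← Finset.sum_sub_distrib]
    exact Finset.sum_congr rfl fun s _ => by ring
  have hR : (∑ r, 2 * (a r ^ 2 + b r ^ 2)) = 2 * (Sa + Sb) := by
    rw [hSa, hSb, mul_add, Finset.mul_sum, Finset.mul_sum, ← Finset.sum_add_distrib]
    exact Finset.sum_congr rfl fun r _ => by ring
  rw [hL, hR]
  nlinarith [sq_nonneg (Sa - Sb), sq_nonneg Sab]
end

section
/- Define T_A(τ) = (27−8τ²)/(18−9τ²) + √((8τ²−9/2)² − 45/4)/(18−9τ²) and T̂_A(τ) = ((3−τ)/2)·T_A(τ). Then for √(9+3√5)/4 ≤ τ ≤ 1, the expression (8τ²−9/2)² − 45/4 is nonnegative, and T̂_A is monotonically increasing with T̂_A(1) = 20/9 and T̂_A(√(9+3√5)/4) = (30+2√5)/11 − (15+√5)√(9+3√5)/66. -/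
noncomputable def TA (τ : ℝ) : ℝ :=
  (27 - 8 * τ ^ 2) / (18 - 9 * τ ^ 2) +
    Real.sqrt ((8 * τ ^ 2 - 9 / 2) ^ 2 - 45 / 4) / (18 - 9 * τ ^ 2)

noncomputable def hatTA (τ : ℝ) : ℝ := ((3 - τ) / 2) * TA τ

/-!
`T̂_A(τ)` is the larger root `y` of the quadratic
`9 (2 - τ²) y² - (27 - 8τ²)(3 - τ) y + 10 (3 - τ)² = 0`, whose discriminant is
`(3 - τ)² ((8τ² - 9/2)² - 45/4)`. On `[0.99, 1]` and for `y ∈ [2, 2.3]`, a range containing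
every value of `T̂_A` there, the quadratic is decreasing in `τ`. Hence for `τ₁ ≤ τ₂` the value
`T̂_A(τ₁)` makes the quadratic at `τ₂` nonpositive, so it lies below the larger root `T̂_A(τ₂)`.
-/

local notation "τ₀" => Real.sqrt (9 + 3 * Real.sqrt 5) / 4

lemma le_root_of_quadratic_nonpos {a b c s y : ℝ} (ha : 0 < a) (hs : 0 ≤ s)
    (hd : discrim a b c = s * s) (h : a * (y * y) + b * y + c ≤ 0) :
    y ≤ (-b + s) / (2 * a) := by
  have hsq : (2 * a * y + b) ^ 2 ≤ s ^ 2 := by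
    have : (2 * a * y + b) ^ 2 = discrim a b c + 4 * a * (a * (y * y) + b * y + c) := by
      unfold discrim; ring
    nlinarith
  rw [le_div_iff₀ (by positivity)]
  linarith [(abs_le_of_sq_le_sq' hsq hs).2]

lemma sq_tau₀ : τ₀ ^ 2 = (9 + 3 * Real.sqrt 5) / 16 := by
  rw [div_pow, Real.sq_sqrt (by positivity)]
  norm_num

lemma tau₀_mem_Icc : τ₀ ∈ Set.Icc (0.99 : ℝ) 1 := by
  have h5 := Real.sq_sqrt (show (0 : ℝ) ≤ 5 by norm_num)
  have h5lo : (2.23 : ℝ) ≤ √5 := by nlinarith [Real.sqrt_nonneg 5]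
  have h5hi : √5 ≤ 7 / 3 := by nlinarith [Real.sqrt_nonneg 5]
  have h0 : 0 ≤ τ₀ := by positivity
  constructor <;> nlinarith [sq_tau₀]

lemma disc_nonneg_of_tau₀_le {τ : ℝ} (h : τ₀ ≤ τ) : 0 ≤ (8 * τ ^ 2 - 9 / 2) ^ 2 - 45 / 4 := by
  have h5 := Real.sq_sqrt (show (0 : ℝ) ≤ 5 by norm_num)
  have hsq : (9 + 3 * Real.sqrt 5) / 16 ≤ τ ^ 2 := by
    rw [← sq_tau₀]; exact pow_le_pow_left₀ (by positivity) h 2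
  nlinarith [Real.sqrt_nonneg 5]

lemma hatTA_eq (τ : ℝ) :
    hatTA τ = ((27 - 8 * τ ^ 2) * (3 - τ) + (3 - τ) * √((8 * τ ^ 2 - 9 / 2) ^ 2 - 45 / 4))
      / (2 * (9 * (2 - τ ^ 2))) := by
  rw [mul_comm 2, ← div_div]
  unfold hatTA TA
  ring

def hatTAQuad (τ y : ℝ) : ℝ :=
  9 * (2 - τ ^ 2) * (y * y) + -((27 - 8 * τ ^ 2) * (3 - τ)) * y + 10 * (3 - τ) ^ 2

lemma discrim_hatTAQuad {τ : ℝ} (hD : 0 ≤ (8 * τ ^ 2 - 9 / 2) ^ 2 - 45 / 4) :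
    discrim (9 * (2 - τ ^ 2)) (-((27 - 8 * τ ^ 2) * (3 - τ))) (10 * (3 - τ) ^ 2) =
      ((3 - τ) * √((8 * τ ^ 2 - 9 / 2) ^ 2 - 45 / 4)) *
        ((3 - τ) * √((8 * τ ^ 2 - 9 / 2) ^ 2 - 45 / 4)) := by
  unfold discrim
  linear_combination (-(3 - τ) ^ 2) * Real.mul_self_sqrt hD

lemma hatTAQuad_hatTA {τ : ℝ} (hD : 0 ≤ (8 * τ ^ 2 - 9 / 2) ^ 2 - 45 / 4) (hτ : τ ^ 2 < 2) :
    hatTAQuad τ (hatTA τ) = 0 := by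
  rw [hatTAQuad, quadratic_eq_zero_iff (by linarith) (discrim_hatTAQuad hD), hatTA_eq]
  left
  ring

lemma le_hatTA_of_hatTAQuad_nonpos {τ y : ℝ} (hD : 0 ≤ (8 * τ ^ 2 - 9 / 2) ^ 2 - 45 / 4)
    (hτ : τ ^ 2 < 2) (h : hatTAQuad τ y ≤ 0) : y ≤ hatTA τ := by
  have hτ3 : 0 ≤ 3 - τ := by nlinarith
  rw [hatTA_eq]
  convert le_root_of_quadratic_nonpos (by linarith)
    (mul_nonneg hτ3 (Real.sqrt_nonneg _)) (discrim_hatTAQuad hD) h using 2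
  ring

lemma hatTA_mem_Icc {τ : ℝ} (h : τ ∈ Set.Icc (0.99 : ℝ) 1) : hatTA τ ∈ Set.Icc (2 : ℝ) 2.3 := by
  obtain ⟨h1, h2⟩ := h
  rw [hatTA_eq]
  set R := √((8 * τ ^ 2 - 9 / 2) ^ 2 - 45 / 4) with hR
  have hR0 : 0 ≤ R := Real.sqrt_nonneg _
  have hR1 : R ≤ 1 := by
    refine Real.sqrt_le_one.mpr ?_
    nlinarith [mul_nonneg (by nlinarith : (0:ℝ) ≤ 1 - τ ^ 2) (by nlinarith : (0:ℝ) ≤ 8 * τ ^ 2 - 1)]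
  have hpos : (0:ℝ) < 2 * (9 * (2 - τ ^ 2)) := by nlinarith
  constructor
  · rw [le_div_iff₀ hpos]; nlinarith
  · rw [div_le_iff₀ hpos]; nlinarith

lemma hatTAQuad_antitoneOn {y : ℝ} (hy : y ∈ Set.Icc (2 : ℝ) 2.3) :
    AntitoneOn (hatTAQuad · y) (Set.Icc 0.99 1) := by
  obtain ⟨hy1, hy2⟩ := hy
  intro τ₁ ⟨h11, h12⟩ τ₂ ⟨h21, h22⟩ hle
  have hslope : 27 * y - 60 + (τ₁ + τ₂) * (-9 * y ^ 2 + 24 * y + 10)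
      - 8 * y * (τ₁ ^ 2 + τ₁ * τ₂ + τ₂ ^ 2) ≤ 0 := by
    nlinarith [mul_nonneg (sub_nonneg.2 hy1) (sub_nonneg.2 h12),
      mul_nonneg (sub_nonneg.2 hy1) (sub_nonneg.2 h22),
      mul_nonneg (sub_nonneg.2 hy2) (sub_nonneg.2 h12)]
  have hdiff : hatTAQuad τ₂ y - hatTAQuad τ₁ y = (τ₂ - τ₁) * (27 * y - 60
      + (τ₁ + τ₂) * (-9 * y ^ 2 + 24 * y + 10) - 8 * y * (τ₁ ^ 2 + τ₁ * τ₂ + τ₂ ^ 2)) := by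
    unfold hatTAQuad; ring
  nlinarith [mul_nonpos_of_nonneg_of_nonpos (sub_nonneg.2 hle) hslope]

lemma hatTA_monotoneOn : MonotoneOn hatTA (Set.Icc τ₀ 1) := by
  have hI : Set.Icc τ₀ 1 ⊆ Set.Icc 0.99 1 := Set.Icc_subset_Icc_left tau₀_mem_Icc.1
  have hsq {τ : ℝ} (h : τ ∈ Set.Icc τ₀ 1) : τ ^ 2 < 2 := by
    obtain ⟨h0, h1⟩ := hI h
    nlinarith
  intro τ₁ h₁ τ₂ h₂ hle
  refine le_hatTA_of_hatTAQuad_nonpos (disc_nonneg_of_tau₀_le h₂.1) (hsq h₂) ?_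
  calc hatTAQuad τ₂ (hatTA τ₁)
      ≤ hatTAQuad τ₁ (hatTA τ₁) :=
        hatTAQuad_antitoneOn (hatTA_mem_Icc (hI h₁)) (hI h₁) (hI h₂) hle
    _ = 0 := hatTAQuad_hatTA (disc_nonneg_of_tau₀_le h₁.1) (hsq h₁)

lemma hatTA_one : hatTA 1 = 20 / 9 := by
  norm_num [hatTA_eq]

lemma hatTA_tau₀ :
    hatTA τ₀ = (30 + 2 * √5) / 11 - (15 + √5) * √(9 + 3 * √5) / 66 := by
  have h5 := Real.sq_sqrt (show (0 : ℝ) ≤ 5 by norm_num)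
  have hD : (8 * τ₀ ^ 2 - 9 / 2) ^ 2 - 45 / 4 = 0 := by
    rw [sq_tau₀]; linear_combination (9 / 4) * h5
  have hne : 2 * (9 * (2 - τ₀ ^ 2)) ≠ 0 := by
    nlinarith [tau₀_mem_Icc.2, tau₀_mem_Icc.1]
  rw [hatTA_eq, hD, Real.sqrt_zero, mul_zero, add_zero, div_eq_iff hne, sq_tau₀]
  linear_combination (9 / 44) * (3 - τ₀) * h5

/-- On `[√(9+3√5)/4, 1]` the discriminant `(8τ²−9/2)² − 45/4` is nonnegative, `T̂_A`
is monotonically increasing, `T̂_A(1) = 20/9` and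
`T̂_A(√(9+3√5)/4) = (30+2√5)/11 − (15+√5)√(9+3√5)/66`. -/
theorem stmt_15 :
    (∀ τ : ℝ, Real.sqrt (9 + 3 * Real.sqrt 5) / 4 ≤ τ → τ ≤ 1 →
      0 ≤ (8 * τ ^ 2 - 9 / 2) ^ 2 - 45 / 4) ∧
    MonotoneOn hatTA (Set.Icc (Real.sqrt (9 + 3 * Real.sqrt 5) / 4) 1) ∧
    hatTA 1 = 20 / 9 ∧
    hatTA (Real.sqrt (9 + 3 * Real.sqrt 5) / 4) =
      (30 + 2 * Real.sqrt 5) / 11 -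
        (15 + Real.sqrt 5) * Real.sqrt (9 + 3 * Real.sqrt 5) / 66 :=
  ⟨fun _ h _ => disc_nonneg_of_tau₀_le h, hatTA_monotoneOn, hatTA_one, hatTA_tau₀⟩
end
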